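/- arXiv:1912.01104 — 2 statements merged into one kernel-verified Lean document; each statement's English description precedes it below -/
import Mathlib

section
/- Let n > 2 be an integer. Then the ring 𝕋ₙ(𝔽₂) of n×n upper triangular matrices over 𝔽₂ is almost n-torsion clean if and only if n = 2ˡ for some integer l ≥ 2. -/
def AlmostTorsionClean (R : Type*) [Ring R] (m : ℕ) : Prop :=
  ∀ r : R, ∃ u e : R, IsUnit u ∧ u ^ m = 1 ∧ e * e = e ∧ r = u + e

def TorsionClean (R : Type*) [Ring R] (m : ℕ) : Prop :=
  AlmostTorsionClean R m ∧ ∀ k : ℕ, 0 < k → k < m → ¬ AlmostTorsionClean R k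

/-- The ring of n×n upper triangular matrices over 𝔽₂, as a subring of the full matrix ring. -/
def Triangular (n : ℕ) : Subring (Matrix (Fin n) (Fin n) (ZMod 2)) where
  carrier := {A | A.BlockTriangular id}
  zero_mem' := Matrix.blockTriangular_zero
  one_mem' := Matrix.blockTriangular_one
  add_mem' := fun ha hb => ha.add hb
  neg_mem' := fun ha => ha.neg
  mul_mem' := fun ha hb => ha.mul hb

/-! Over 𝔽₂ the units of 𝕋ₙ are the unipotent matrices `1 + N`, `N` strictly upper triangular,
so `Nⁿ = 0` and, in characteristic 2, `(1 + N) ^ 2ᵏ = 1 + N ^ 2ᵏ = 1` as soon as `n ≤ 2ᵏ`.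
Splitting off the idempotent `diag (rᵢᵢ + 1)` therefore makes 𝕋ₙ almost `2ᵏ`-torsion clean.
Conversely, the only idempotent completing a unit to the shift matrix `J` is `1`, so
`(1 + J)ⁿ = 1`; the order of `1 + J` is a power `2ᵏ` dividing `n`, and `J ^ 2ᵏ = 0` forces
`n ≤ 2ᵏ`. -/

open Matrix Polynomial

namespace Matrix

variable {m R : Type*} [Fintype m] [LinearOrder m]

theorem IsUpperTriangular.mul_apply_self [NonUnitalNonAssocSemiring R] {M N : Matrix m m R}
    (hM : M.IsUpperTriangular) (hN : N.IsUpperTriangular) (i : m) :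
    (M * N) i i = M i i * N i i := by
  rw [mul_apply, Finset.sum_eq_single i]
  · intro k _ hk
    rcases hk.lt_or_gt with h | h
    · rw [hM h, zero_mul]
    · rw [hN h, mul_zero]
  · simp

variable [DecidableEq m] [CommRing R]

theorem IsUpperTriangular.pow_card_eq_zero {N : Matrix m m R} (hN : N.IsUpperTriangular)
    (hd : ∀ i, N i i = 0) : N ^ Fintype.card m = 0 := by
  have hchar : N.charpoly = X ^ Fintype.card m := by
    simp [charpoly_of_isUpperTriangular N hN, hd]
  simpa [hchar] using aeval_self_charpoly N

theorem IsUpperTriangular.pow_eq_one_of_diag_eq_one (p : ℕ) [Fact p.Prime] [CharP R p]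
    {M : Matrix m m R} (hM : M.IsUpperTriangular) (hd : ∀ i, M i i = 1) {k : ℕ}
    (hk : Fintype.card m ≤ p ^ k) : M ^ p ^ k = 1 := by
  rcases isEmpty_or_nonempty m with _ | _
  · exact Subsingleton.elim _ _
  have hN : (M - 1) ^ p ^ k = 0 :=
    pow_eq_zero_of_le hk <| IsUpperTriangular.pow_card_eq_zero (hM.sub blockTriangular_one)
      (by simp [hd])
  calc M ^ p ^ k = (1 + (M - 1)) ^ p ^ k := by rw [add_sub_cancel]
    _ = 1 := by rw [add_pow_char_pow_of_commute p k (Commute.one_left _), one_pow, hN, add_zero]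

end Matrix

section ShiftMatrix

variable {n : ℕ} {R : Type*}

variable (n R) in
def shiftMatrix [Zero R] [One R] : Matrix (Fin n) (Fin n) R :=
  of fun i j => if (j : ℕ) = i + 1 then 1 else 0

theorem shiftMatrix_isUpperTriangular [Zero R] [One R] : (shiftMatrix n R).IsUpperTriangular :=
  fun i j (hij : j < i) => if_neg (by omega)

theorem shiftMatrix_pow_apply [Semiring R] (k : ℕ) (i j : Fin n) :
    (shiftMatrix n R ^ k) i j = if (j : ℕ) = i + k then 1 else 0 := by
  induction k generalizing i with
  | zero => simp [one_apply, Fin.ext_iff, eq_comm]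
  | succ k ih =>
    rw [pow_succ', mul_apply]
    simp only [ih]
    simp only [shiftMatrix, of_apply, boole_mul]
    rw [Fin.sum_univ_eq_sum_range
      (fun l => if l = (i : ℕ) + 1 then (if (j : ℕ) = l + k then (1 : R) else 0) else 0),
      Finset.sum_ite_eq']
    simp only [Finset.mem_range]
    split_ifs <;> first | rfl | (exfalso; omega)

theorem shiftMatrix_pow_eq_zero_iff [Semiring R] [Nontrivial R] {k : ℕ} :
    shiftMatrix n R ^ k = 0 ↔ n ≤ k := by
  constructor
  · intro h
    by_contra! hk
    have := congrFun (congrFun h ⟨0, by omega⟩) ⟨k, hk⟩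
    simp [shiftMatrix_pow_apply] at this
  · intro hk
    ext i j
    rw [shiftMatrix_pow_apply, if_neg (by omega)]
    rfl

end ShiftMatrix

namespace Triangular

variable {n : ℕ}

theorem isUpperTriangular (x : Triangular n) :
    (x : Matrix (Fin n) (Fin n) (ZMod 2)).IsUpperTriangular :=
  x.2

theorem diag_eq_one_of_isUnit {x : Triangular n} (hx : IsUnit x) (i : Fin n) :
    (x : Matrix (Fin n) (Fin n) (ZMod 2)) i i = 1 := by
  obtain ⟨y, hxy⟩ := hx.exists_right_inv
  have hii := congrFun (congrFun (congrArg Subtype.val hxy) i) i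
  rw [Subring.coe_mul, (isUpperTriangular x).mul_apply_self (isUpperTriangular y),
    Subring.coe_one, one_apply_eq] at hii
  have units_zmod_two : ∀ a b : ZMod 2, a * b = 1 → a = 1 := by decide
  exact units_zmod_two _ _ hii

theorem pow_two_pow_eq_one {x : Triangular n}
    (hx : ∀ i, (x : Matrix (Fin n) (Fin n) (ZMod 2)) i i = 1) {k : ℕ} (hk : n ≤ 2 ^ k) : x ^ 2 ^ k = 1 :=
  Subtype.ext <| by
    simpa using (isUpperTriangular x).pow_eq_one_of_diag_eq_one 2 hx (by simpa using hk)

theorem isUnit_of_diag_eq_one {x : Triangular n}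
    (hx : ∀ i, (x : Matrix (Fin n) (Fin n) (ZMod 2)) i i = 1) : IsUnit x :=
  IsUnit.of_pow_eq_one (pow_two_pow_eq_one hx n.lt_two_pow_self.le) (by positivity)

theorem almostTorsionClean_two_pow {k : ℕ} (hk : n ≤ 2 ^ k) :
    AlmostTorsionClean (Triangular n) (2 ^ k) := by
  intro r
  let e : Triangular n := ⟨diagonal fun i => (r : Matrix (Fin n) (Fin n) (ZMod 2)) i i + 1,
    blockTriangular_diagonal _⟩
  have hdiag : ∀ i, ((r - e : Triangular n) : Matrix (Fin n) (Fin n) (ZMod 2)) i i = 1 := by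
    intro i
    simp [e]
  refine ⟨r - e, e, isUnit_of_diag_eq_one hdiag, pow_two_pow_eq_one hdiag hk, ?_, by abel⟩
  refine Subtype.ext ?_
  simp_rw [Subring.coe_mul, e, diagonal_mul_diagonal, ← sq, ZMod.pow_card]

theorem exists_two_pow_dvd_of_almostTorsionClean [NeZero n] {m : ℕ}
    (h : AlmostTorsionClean (Triangular n) m) : ∃ k, n ≤ 2 ^ k ∧ 2 ^ k ∣ m := by
  let J : Triangular n := ⟨shiftMatrix n (ZMod 2), shiftMatrix_isUpperTriangular⟩
  obtain ⟨u, e, hu, hum, he, hJ⟩ := h J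
  have he_diag : ∀ i, (e : Matrix (Fin n) (Fin n) (ZMod 2)) i i = 1 := by
    intro i
    have hii : 1 + (e : Matrix (Fin n) (Fin n) (ZMod 2)) i i = 0 := by
      simpa [J, shiftMatrix, diag_eq_one_of_isUnit hu i, eq_comm] using
        congrFun (congrFun (congrArg Subtype.val hJ) i) i
    rw [eq_neg_of_add_eq_zero_right hii, CharTwo.neg_eq]
  have he1 : e = 1 :=
    (IsIdempotentElem.iff_eq_one_of_isUnit (isUnit_of_diag_eq_one he_diag)).1 he
  have hu1 : u = 1 + J := by
    rw [hJ, he1, add_left_comm, CharTwo.add_self_eq_zero, add_zero]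
  obtain ⟨k, -, hk⟩ := (Nat.dvd_prime_pow Nat.prime_two).1 <| orderOf_dvd_of_pow_eq_one <|
    pow_two_pow_eq_one (diag_eq_one_of_isUnit hu) n.lt_two_pow_self.le
  refine ⟨k, ?_, hk ▸ orderOf_dvd_of_pow_eq_one hum⟩
  have hJk : J ^ 2 ^ k = 0 := by
    have := hk ▸ pow_orderOf_eq_one u
    rwa [hu1, add_pow_char_pow_of_commute 2 k (Commute.one_left J), one_pow, add_eq_left] at this
  rw [← shiftMatrix_pow_eq_zero_iff (R := ZMod 2)]
  simpa [J] using congrArg Subtype.val hJk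

end Triangular

theorem Tn_F2_almost_n_torsion_clean_iff (n : ℕ) (hn : 2 < n) :
    AlmostTorsionClean (Triangular n) n ↔ ∃ l : ℕ, 2 ≤ l ∧ n = 2 ^ l := by
  constructor
  · intro h
    have : NeZero n := ⟨by omega⟩
    obtain ⟨l, hle, hdvd⟩ := Triangular.exists_two_pow_dvd_of_almostTorsionClean h
    have hn_eq : n = 2 ^ l := hle.antisymm (Nat.le_of_dvd (by omega) hdvd)
    have h2l : 2 ^ 1 < 2 ^ l := hn_eq ▸ hn
    exact ⟨l, (Nat.pow_lt_pow_iff_right (by norm_num)).1 h2l, hn_eq⟩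
  · rintro ⟨l, -, rfl⟩
    exact Triangular.almostTorsionClean_two_pow le_rfl
end

section
/- Let n ≥ 3 be an integer. Then the ring 𝕋ₙ(𝔽₂) of n×n upper triangular matrices over 𝔽₂ is n-torsion clean if and only if 𝕋ₙ(𝔽₂) is almost n-torsion clean. -/
open Matrix Finset

/-- choose (2a) (2b) ≡ choose a b mod 2 -/
lemma choose_two_mul_two_mul (a b : ℕ) :
    Nat.choose (2 * a) (2 * b) ≡ Nat.choose a b [MOD 2] := by
  have := @Choose.choose_modEq_choose_mod_mul_choose_div_nat (2*a) (2*b) 2 ⟨Nat.prime_two⟩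
  simpa [Nat.mul_mod_right, Nat.mul_div_cancel_left] using this

lemma odd_choose_pow (v m : ℕ) (hm : m % 2 = 1) :
    Nat.choose (2 ^ v * m) (2 ^ v) % 2 = 1 := by
  induction v with
  | zero => simpa [Nat.choose_one_right] using hm
  | succ v ih =>
    have h := choose_two_mul_two_mul (2 ^ v * m) (2 ^ v)
    have e1 : 2 ^ (v+1) * m = 2 * (2 ^ v * m) := by ring
    have e2 : 2 ^ (v+1) = 2 * 2 ^ v := by ring
    rw [e1, e2]
    unfold Nat.ModEq at h
    omega

def Jmat (n : ℕ) : Matrix (Fin n) (Fin n) (ZMod 2) :=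
  Matrix.of fun a b => if (b : ℕ) = (a : ℕ) + 1 then 1 else 0

lemma Jmat_tri (n : ℕ) : (Jmat n).BlockTriangular id := by
  intro i j hij
  simp only [Jmat, Matrix.of_apply, ite_eq_right_iff]
  intro h; exfalso; simp only [id] at hij; omega

lemma Jmat_pow (n i : ℕ) :
    (Jmat n) ^ i = Matrix.of fun a b : Fin n => if (b : ℕ) = (a : ℕ) + i then 1 else 0 := by
  induction i with
  | zero =>
    ext a b
    simp [Matrix.one_apply, Fin.ext_iff, eq_comm]
  | succ i ih =>
    rw [pow_succ, ih]
    ext a b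
    rw [Matrix.mul_apply]
    simp only [Matrix.of_apply, Jmat]
    by_cases hab : (b : ℕ) = (a : ℕ) + (i + 1)
    · have hc : ((a : ℕ) + i) < n := by omega
      rw [Finset.sum_eq_single (⟨(a : ℕ) + i, hc⟩ : Fin n)]
      · simp [hab]; omega
      · intro c _ hc'
        have : (c : ℕ) ≠ (a : ℕ) + i := by
          intro h; apply hc'; exact Fin.ext h
        simp [this]
      · intro h; exact absurd (Finset.mem_univ _) h
    · rw [if_neg hab]
      apply Finset.sum_eq_zero
      intro c _
      by_cases h1 : (c : ℕ) = (a : ℕ) + i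
      · have : (b : ℕ) ≠ (c : ℕ) + 1 := by omega
        simp [this]
      · simp [h1]

lemma strict_pow_eq_zero {n : ℕ} (f : Matrix (Fin n) (Fin n) (ZMod 2))
    (h : ∀ i j : Fin n, (j : ℕ) ≤ (i : ℕ) → f i j = 0) : f ^ n = 0 := by
  have key : ∀ m (i j : Fin n), (j : ℕ) < (i : ℕ) + m → (f ^ m) i j = 0 := by
    intro m
    induction m with
    | zero =>
      intro i j hj
      rw [pow_zero, Matrix.one_apply_ne]
      intro e; rw [e] at hj; omega
    | succ m ih =>
      intro i j hj
      rw [pow_succ, Matrix.mul_apply]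
      apply Finset.sum_eq_zero
      intro c _
      by_cases hc : (c : ℕ) < (i : ℕ) + m
      · rw [ih i c hc, zero_mul]
      · rw [h c j (by omega), mul_zero]
  ext i j
  rw [key n i j (by omega)]
  simp

lemma diag_mul {n : ℕ} (A B : Matrix (Fin n) (Fin n) (ZMod 2))
    (hA : A.BlockTriangular id) (hB : B.BlockTriangular id) (i : Fin n) :
    (A * B) i i = A i i * B i i := by
  rw [Matrix.mul_apply]
  apply Finset.sum_eq_single i
  · intro c _ hc
    rcases lt_or_gt_of_ne hc with h | h
    · rw [hA (show id (c : Fin n) < id i from h), zero_mul]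
    · rw [hB (show id i < id c from h), mul_zero]
  · intro h; exact absurd (Finset.mem_univ _) h



lemma not_almost (n k : ℕ) (hk : 0 < k) (hkn : k < n) :
    ¬ AlmostTorsionClean (Triangular n) k := by
  intro hak
  have hn0 : 0 < n := by omega
  have hJmem : Jmat n ∈ Triangular n := Jmat_tri n
  obtain ⟨u, e, hu, huk, hee, hre⟩ := hak ⟨Jmat n, hJmem⟩
  have z1 : ∀ x y : ZMod 2, x * y = 1 → x = 1 := by decide
  have z2 : ∀ x y : ZMod 2, (0 : ZMod 2) = x + y → x = 1 → y = 1 := by decide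
  -- u has all-ones diagonal
  obtain ⟨v0, hv0⟩ := hu.exists_right_inv
  have hudiag : ∀ i : Fin n, (u : Matrix (Fin n) (Fin n) (ZMod 2)) i i = 1 := by
    intro i
    have h1 : ((u * v0 : Triangular n) : Matrix (Fin n) (Fin n) (ZMod 2)) i i
        = ((1 : Triangular n) : Matrix (Fin n) (Fin n) (ZMod 2)) i i := by rw [hv0]
    rw [Subring.coe_mul, diag_mul _ _ u.2 v0.2 i, OneMemClass.coe_one,
      Matrix.one_apply_eq] at h1
    exact z1 _ _ h1
  -- the matrix-level equation
  have hcoe_re : Jmat n = (u : Matrix (Fin n) (Fin n) (ZMod 2)) + e := by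
    have := congrArg Subtype.val hre
    simpa using this
  have hJdiag : ∀ i : Fin n, Jmat n i i = 0 := by
    intro i
    simp only [Jmat, Matrix.of_apply]
    rw [if_neg]; omega
  have hediag : ∀ i : Fin n, (e : Matrix (Fin n) (Fin n) (ZMod 2)) i i = 1 := by
    intro i
    have h := congrArg (fun A : Matrix (Fin n) (Fin n) (ZMod 2) => A i i) hcoe_re
    simp only [Matrix.add_apply] at h
    rw [hJdiag i] at h
    exact z2 _ _ h (hudiag i)
  -- e = 1
  have h1e : (1 - e) * e = 0 := by rw [sub_mul, one_mul, hee, sub_self]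
  have hff : (1 - e) * (1 - e) = 1 - e := by rw [mul_sub, mul_one, h1e, sub_zero]
  have hfn : (1 - e) ^ n = 1 - e := by
    obtain ⟨m, rfl⟩ : ∃ m, n = m + 1 := ⟨n - 1, by omega⟩
    exact IsIdempotentElem.pow_succ_eq m hff
  have hfz : ((1 - e : Triangular n) : Matrix (Fin n) (Fin n) (ZMod 2)) ^ n = 0 := by
    apply strict_pow_eq_zero
    intro i j hij
    have hentry : ((1 - e : Triangular n) : Matrix (Fin n) (Fin n) (ZMod 2)) i j
        = (1 : Matrix (Fin n) (Fin n) (ZMod 2)) i j - (e : Matrix (Fin n) (Fin n) (ZMod 2)) i j := by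
      have hc : ((1 - e : Triangular n) : Matrix (Fin n) (Fin n) (ZMod 2))
          = 1 - (e : Matrix (Fin n) (Fin n) (ZMod 2)) := by push_cast; rfl
      rw [hc, Matrix.sub_apply]
    by_cases hji : (j : ℕ) = (i : ℕ)
    · have : j = i := Fin.ext hji
      subst this
      rw [hentry, Matrix.one_apply_eq, hediag j, sub_self]
    · have hlt : (j : ℕ) < (i : ℕ) := by omega
      rw [hentry, Matrix.one_apply_ne (by intro h; rw [h] at hlt; omega),
        e.2 (show id j < id i from hlt), sub_self]
  have hE : e = 1 := by
    have h := congrArg Subtype.val hfn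
    rw [SubmonoidClass.coe_pow] at h
    have : ((1 - e : Triangular n) : Matrix (Fin n) (Fin n) (ZMod 2)) = 0 := by
      rw [← h, hfz]
    have hf0 : (1 - e : Triangular n) = 0 := Subtype.ext (by simpa using this)
    have := sub_eq_zero.mp hf0
    exact this.symm
  -- u = Jmat n + 1
  have hU : (u : Matrix (Fin n) (Fin n) (ZMod 2)) = Jmat n + 1 := by
    rw [hE] at hcoe_re
    have h : (u : Matrix (Fin n) (Fin n) (ZMod 2)) = Jmat n - 1 := by
      rw [OneMemClass.coe_one] at hcoe_re
      rw [eq_sub_iff_add_eq, ← hcoe_re]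
    rw [h]
    ext i j
    rw [Matrix.sub_apply, Matrix.add_apply]
    have : ∀ x y : ZMod 2, x - y = x + y := by decide
    exact this _ _
  have hUk : (Jmat n + 1) ^ k = (1 : Matrix (Fin n) (Fin n) (ZMod 2)) := by
    have h := congrArg Subtype.val huk
    rw [SubmonoidClass.coe_pow, hU] at h
    simpa using h
  -- binomial expansion and entry extraction
  set w := k.factorization 2 with hw
  have hordle : 2 ^ w ≤ k := Nat.ordProj_le 2 (by omega)
  have hm : (k / 2 ^ w) % 2 = 1 := by
    have h2 : ¬ (2 ∣ k / 2 ^ w) := Nat.not_dvd_ordCompl Nat.prime_two (by omega)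
    exact Nat.two_dvd_ne_zero.mp h2
  have hodd : Nat.choose k (2 ^ w) % 2 = 1 := by
    set m := k / 2 ^ w with hmdef
    have hkm : k = 2 ^ w * m := (Nat.ordProj_mul_ordCompl_eq_self k 2).symm
    rw [hkm]
    exact odd_choose_pow w m hm
  have hvlt : 2 ^ w < n := lt_of_le_of_lt hordle hkn
  have h2w0 : 0 < 2 ^ w := Nat.pow_pos (n := w) (by omega)
  set a0 : Fin n := ⟨0, hn0⟩
  set bp : Fin n := ⟨2 ^ w, hvlt⟩
  have hcomm : Commute (Jmat n) (1 : Matrix (Fin n) (Fin n) (ZMod 2)) := Commute.one_right _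
  rw [hcomm.add_pow' k] at hUk
  have hentry := congrArg (fun A : Matrix (Fin n) (Fin n) (ZMod 2) => A a0 bp) hUk
  simp only [one_pow, mul_one, Matrix.sum_apply, Matrix.smul_apply] at hentry
  rw [Finset.sum_eq_single (2 ^ w, k - 2 ^ w)] at hentry
  · rw [Jmat_pow] at hentry
    simp only [Matrix.of_apply] at hentry
    rw [if_pos (by simp [a0, bp])] at hentry
    rw [Matrix.one_apply_ne (by simp [a0, bp, Fin.ext_iff]; omega)] at hentry
    rw [nsmul_eq_mul, mul_one] at hentry
    have : (2 : ℕ) ∣ Nat.choose k (2 ^ w) := by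
      exact (ZMod.natCast_eq_zero_iff _ 2).mp hentry
    omega
  · intro c hc hne
    rw [Jmat_pow]
    simp only [Matrix.of_apply]
    rw [if_neg, smul_zero]
    intro hb
    apply hne
    have hc1 : (2 : ℕ) ^ w = c.1 := by simpa [a0, bp] using hb
    have hm2 := Finset.HasAntidiagonal.mem_antidiagonal.mp hc
    ext
    · exact hc1.symm
    · omega
  · intro hnot
    exfalso
    exact hnot (Finset.HasAntidiagonal.mem_antidiagonal.mpr (by omega))

theorem Tn_F2_n_torsion_clean_iff_almost (n : ℕ) (hn : 3 ≤ n) :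
    TorsionClean (Triangular n) n ↔ AlmostTorsionClean (Triangular n) n := by
  constructor
  · exact fun h => h.1
  · intro h
    exact ⟨h, fun k hk hkn => not_almost n k hk hkn⟩
end
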